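/- Let f be differentiable, strongly convex with parameter m, and satisfy the quadratic upper bound with constant L₁. Let (x_k) be generated by Random Pursuit with absolute line search accuracy μ from initial point x₀. Then for all N ≥ 0: E[f(x_N) − f(x*)] ≤ (1 − m/(L₁ n))^N (f(x₀) − f(x*)) + L₁² n μ²/(2m). -/

import Mathlib

open MeasureTheory ProbabilityTheory
open scoped RealInnerProductSpace

/-!
Exact line search along a unit direction `u` lowers `f` by at least `⟪∇f x, u⟫² / (2L₁)`, and
missing the exact step by `μ` costs at most `L₁μ²/2`, because the directional derivative vanishes
at the exact minimiser. For a rotation-invariant direction independent of the current point,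
`E⟪∇f x, u⟫² = E‖∇f x‖² / n`, and strong convexity gives `‖∇f x‖² ≥ 2m (f x - f x*)`. So the
expected gap `e k` obeys `e (k + 1) ≤ (1 - m/(L₁n)) e k + L₁μ²/2`, a contraction with fixed point
`L₁²nμ²/(2m)`.
-/

open Module

section QuadraticBounds

variable {E : Type*} [NormedAddCommGroup E] [InnerProductSpace ℝ E]

lemma eq_zero_of_forall_nonneg_mul_add_mul_sq {c K : ℝ} (h : ∀ s : ℝ, 0 ≤ s * c + K * s ^ 2) :
    c = 0 := by
  have hd := discrim_le_zero (a := K) (b := c) (c := 0) fun s => by linarith [h s]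
  rw [discrim] at hd
  nlinarith [sq_nonneg c]

lemma le_add_mul_inner_add_sq_of_norm_eq_one {f : E → ℝ} {f' : E → E} {L : ℝ}
    (hquad : ∀ x y, f y - f x - ⟪f' x, y - x⟫ ≤ L / 2 * ‖y - x‖ ^ 2)
    {u : E} (hu : ‖u‖ = 1) (x : E) (t : ℝ) :
    f (x + t • u) ≤ f x + t * ⟪f' x, u⟫ + L / 2 * t ^ 2 := by
  have h := hquad x (x + t • u)
  rw [add_sub_cancel_left, real_inner_smul_right, norm_smul, hu, mul_one, Real.norm_eq_abs,
    sq_abs] at h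
  linarith

lemma inner_eq_zero_of_forall_le_line {f : E → ℝ} {f' : E → E} {L : ℝ}
    (hquad : ∀ x y, f y - f x - ⟪f' x, y - x⟫ ≤ L / 2 * ‖y - x‖ ^ 2)
    {u y : E} (hu : ‖u‖ = 1) (hy : ∀ t : ℝ, f y ≤ f (y + t • u)) : ⟪f' y, u⟫ = 0 :=
  eq_zero_of_forall_nonneg_mul_add_mul_sq (K := L / 2) fun s => by
    linarith [hy s, le_add_mul_inner_add_sq_of_norm_eq_one hquad hu y s]

lemma le_sub_inner_sq_add_of_approx_line_min {f : E → ℝ} {f' : E → E} {L μ : ℝ} (hL : 0 < L)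
    (hquad : ∀ x y, f y - f x - ⟪f' x, y - x⟫ ≤ L / 2 * ‖y - x‖ ^ 2)
    {x u : E} (hu : ‖u‖ = 1) {hs ht : ℝ} (hls : ∀ t : ℝ, f (x + hs • u) ≤ f (x + t • u))
    (happ : |ht - hs| ≤ μ) :
    f (x + ht • u) ≤ f x - ⟪f' x, u⟫ ^ 2 / (2 * L) + L / 2 * μ ^ 2 := by
  set y := x + hs • u
  have hline : ∀ t : ℝ, y + t • u = x + (hs + t) • u := fun t => by
    rw [add_smul, add_assoc]
  have hz : ⟪f' y, u⟫ = 0 :=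
    inner_eq_zero_of_forall_le_line hquad hu fun t => (hline t).symm ▸ hls (hs + t)
  have hsq : (ht - hs) ^ 2 ≤ μ ^ 2 := by
    rw [← sq_abs]; exact pow_le_pow_left₀ (abs_nonneg _) happ 2
  have happrox : f (x + ht • u) ≤ f y + L / 2 * μ ^ 2 := by
    have h := le_add_mul_inner_add_sq_of_norm_eq_one hquad hu y (ht - hs)
    rw [hline, hz, add_sub_cancel] at h
    nlinarith
  have hexact : f y ≤ f x - ⟪f' x, u⟫ ^ 2 / (2 * L) := by
    set c := ⟪f' x, u⟫
    have h := le_add_mul_inner_add_sq_of_norm_eq_one hquad hu x (-(c / L))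
    have he : -(c / L) * c + L / 2 * (-(c / L)) ^ 2 = -(c ^ 2 / (2 * L)) := by
      field_simp; ring
    linarith [hls (-(c / L))]
  linarith

lemma norm_sq_le_two_mul_sub_of_forall_le {f : E → ℝ} {f' : E → E} {L : ℝ} (hL : 0 < L)
    (hquad : ∀ x y, f y - f x - ⟪f' x, y - x⟫ ≤ L / 2 * ‖y - x‖ ^ 2)
    {xstar : E} (hmin : ∀ y, f xstar ≤ f y) (x : E) :
    ‖f' x‖ ^ 2 ≤ 2 * L * (f x - f xstar) := by
  have h := hquad x (x - L⁻¹ • f' x)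
  rw [sub_sub_cancel_left, inner_neg_right, real_inner_smul_right, real_inner_self_eq_norm_sq,
    norm_neg, norm_smul, mul_pow, Real.norm_eq_abs, sq_abs] at h
  have hgap : ‖f' x‖ ^ 2 / (2 * L) ≤ f x - f xstar := by
    have he : L / 2 * ((L⁻¹) ^ 2 * ‖f' x‖ ^ 2) - L⁻¹ * ‖f' x‖ ^ 2 = -(‖f' x‖ ^ 2 / (2 * L)) := by
      field_simp; ring
    linarith [hmin (x - L⁻¹ • f' x)]
  rwa [div_le_iff₀ (by positivity), mul_comm] at hgap

/-- The Polyak–Łojasiewicz inequality of a strongly convex function. -/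
lemma two_mul_sub_le_norm_sq_of_strongConvex {f : E → ℝ} {f' : E → E} {m : ℝ} (hm : 0 < m)
    (hsc : ∀ x y, m / 2 * ‖y - x‖ ^ 2 ≤ f y - f x - ⟪f' x, y - x⟫) (x y : E) :
    2 * m * (f x - f y) ≤ ‖f' x‖ ^ 2 := by
  have h := hsc x y
  have hcs : -(‖f' x‖ * ‖y - x‖) ≤ ⟪f' x, y - x⟫ :=
    neg_le_of_abs_le (abs_real_inner_le_norm _ _)
  nlinarith [sq_nonneg (m * ‖y - x‖ - ‖f' x‖)]

end QuadraticBounds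

section SphereMoment

variable {E : Type*} [NormedAddCommGroup E] [InnerProductSpace ℝ E]

lemma inner_sq_le_norm_sq_of_norm_eq_one (v : E) {u : E} (hu : ‖u‖ = 1) : ⟪v, u⟫ ^ 2 ≤ ‖v‖ ^ 2 := by
  simpa [hu] using pow_le_pow_left₀ (abs_nonneg _) (abs_real_inner_le_norm v u) 2

lemma integrable_inner_sq_of_ae_norm_eq_one {Ω : Type*} [MeasurableSpace Ω] {P : Measure Ω}
    {X U : Ω → E} (hXU : AEStronglyMeasurable (fun ω => ⟪X ω, U ω⟫ ^ 2) P)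
    (hX : Integrable (fun ω => ‖X ω‖ ^ 2) P) (hU : ∀ᵐ ω ∂P, ‖U ω‖ = 1) :
    Integrable (fun ω => ⟪X ω, U ω⟫ ^ 2) P :=
  hX.mono' hXU <| hU.mono fun ω hω => by
    rw [Real.norm_of_nonneg (sq_nonneg _)]; exact inner_sq_le_norm_sq_of_norm_eq_one _ hω

lemma finrank_pos_of_ae_norm_eq_one [FiniteDimensional ℝ E] [MeasurableSpace E]
    {μs : Measure E} [NeZero μs]
    (hsphere : ∀ᵐ u ∂μs, ‖u‖ = 1) : 0 < finrank ℝ E := by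
  obtain ⟨v, hv⟩ := hsphere.exists
  exact finrank_pos_iff_exists_ne_zero.mpr ⟨v, norm_ne_zero_iff.mp (by simp [hv])⟩

variable [FiniteDimensional ℝ E] [MeasurableSpace E] [BorelSpace E] {μs : Measure E}

lemma integral_inner_sq_eq_of_norm_eq
    (hinv : ∀ e : E ≃ₗᵢ[ℝ] E, μs.map e = μs) {w w' : E} (h : ‖w‖ = ‖w'‖) :
    ∫ u, ⟪w, u⟫ ^ 2 ∂μs = ∫ u, ⟪w', u⟫ ^ 2 ∂μs := by
  set e := Submodule.reflection (ℝ ∙ (w - w'))ᗮ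
  have he : e w = w' := Submodule.reflection_sub h
  conv_rhs => rw [← hinv e]
  rw [integral_map e.continuous.aemeasurable (by fun_prop)]
  simp_rw [← he, LinearIsometryEquiv.inner_map_map]

variable [IsProbabilityMeasure μs]

/-- Over an orthonormal basis `b`, rotation invariance makes all `∫ ⟪‖v‖ • b i, u⟫²` equal to
`∫ ⟪v, u⟫²`, while `∑ i, ⟪b i, u⟫² = ‖u‖² = 1` on the sphere. -/
lemma finrank_mul_integral_inner_sq (hsphere : ∀ᵐ u ∂μs, ‖u‖ = 1)
    (hinv : ∀ e : E ≃ₗᵢ[ℝ] E, μs.map e = μs) (v : E) :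
    (finrank ℝ E : ℝ) * ∫ u, ⟪v, u⟫ ^ 2 ∂μs = ‖v‖ ^ 2 := by
  let b := stdOrthonormalBasis ℝ E
  have hint : ∀ w : E, Integrable (fun u => ⟪w, u⟫ ^ 2) μs := fun w =>
    integrable_inner_sq_of_ae_norm_eq_one (X := fun _ => w) (by fun_prop) (integrable_const _)
      hsphere
  calc (finrank ℝ E : ℝ) * ∫ u, ⟪v, u⟫ ^ 2 ∂μs
      = ∑ i, ∫ u, ⟪‖v‖ • b i, u⟫ ^ 2 ∂μs := by
        rw [Finset.sum_congr rfl fun i _ => integral_inner_sq_eq_of_norm_eq hinv (w := ‖v‖ • b i)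
          (w' := v) (by simp [norm_smul, b.norm_eq_one])]
        simp
    _ = ‖v‖ ^ 2 * ∫ u, ∑ i, ⟪b i, u⟫ ^ 2 ∂μs := by
        simp_rw [real_inner_smul_left, mul_pow, integral_const_mul, ← Finset.mul_sum,
          integral_finsetSum _ fun i _ => hint (b i)]
    _ = ‖v‖ ^ 2 := by
        rw [integral_congr_ae (g := fun _ => (1 : ℝ)) (hsphere.mono fun u hu => by
          simp [b.sum_sq_inner_right, hu])]
        simp

lemma finrank_mul_integral_inner_sq_of_indepFun {Ω : Type*} [MeasurableSpace Ω]
    {P : Measure Ω} [IsProbabilityMeasure P] {X U : Ω → E} (hX : Measurable X)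
    (hU : Measurable U) (hXU : IndepFun X U P) (hlaw : P.map U = μs)
    (hsphere : ∀ᵐ u ∂μs, ‖u‖ = 1) (hinv : ∀ e : E ≃ₗᵢ[ℝ] E, μs.map e = μs)
    (hXi : Integrable (fun ω => ‖X ω‖ ^ 2) P) :
    (finrank ℝ E : ℝ) * ∫ ω, ⟪X ω, U ω⟫ ^ 2 ∂P = ∫ ω, ‖X ω‖ ^ 2 ∂P := by
  have hpair : P.map (fun ω => (X ω, U ω)) = (P.map X).prod μs := by
    rw [← hlaw]
    exact (indepFun_iff_map_prod_eq_prod_map_map hX.aemeasurable hU.aemeasurable).mp hXU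
  have hF : Integrable (fun p : E × E => ⟪p.1, p.2⟫ ^ 2) ((P.map X).prod μs) := by
    rw [← hpair, integrable_map_measure (by fun_prop) (by fun_prop)]
    exact integrable_inner_sq_of_ae_norm_eq_one (by fun_prop) hXi
      (ae_of_ae_map hU.aemeasurable (hlaw ▸ hsphere))
  calc (finrank ℝ E : ℝ) * ∫ ω, ⟪X ω, U ω⟫ ^ 2 ∂P
      = (finrank ℝ E : ℝ) * ∫ p, ⟪p.1, p.2⟫ ^ 2 ∂((P.map X).prod μs) := by
        rw [← hpair, integral_map (by fun_prop) (by fun_prop)]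
    _ = ∫ z, ‖z‖ ^ 2 ∂(P.map X) := by
        rw [integral_prod _ hF, ← integral_const_mul]
        simp_rw [finrank_mul_integral_inner_sq hsphere hinv]
    _ = ∫ ω, ‖X ω‖ ^ 2 ∂P := integral_map hX.aemeasurable (by fun_prop)

end SphereMoment

section ExpectedDescent

variable {E : Type*} [NormedAddCommGroup E] [InnerProductSpace ℝ E] [FiniteDimensional ℝ E]
  [MeasurableSpace E] [BorelSpace E] {μs : Measure E} [IsProbabilityMeasure μs]
  {Ω : Type*} [MeasurableSpace Ω] {P : Measure Ω} [IsProbabilityMeasure P]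

/-- One Random Pursuit step in expectation: `D` is the current gap `f x - f x*`, `G` the current
gradient, `U` the direction and `D'` the next gap. -/
lemma integrable_and_integral_le_one_sub_mul_integral_add {D D' : Ω → ℝ} {G U : Ω → E}
    {L m c : ℝ} (hL : 0 < L) (hG : Measurable G) (hU : Measurable U) (hGU : IndepFun G U P)
    (hlaw : P.map U = μs) (hsphere : ∀ᵐ u ∂μs, ‖u‖ = 1)
    (hinv : ∀ e : E ≃ₗᵢ[ℝ] E, μs.map e = μs) (hD : Integrable D P)
    (hD'm : AEStronglyMeasurable D' P) (hD'0 : ∀ ω, 0 ≤ D' ω)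
    (hGD : ∀ ω, ‖G ω‖ ^ 2 ≤ 2 * L * D ω) (hPL : ∀ ω, 2 * m * D ω ≤ ‖G ω‖ ^ 2)
    (hstep : ∀ᵐ ω ∂P, D' ω ≤ D ω - ⟪G ω, U ω⟫ ^ 2 / (2 * L) + c) :
    Integrable D' P ∧ ∫ ω, D' ω ∂P ≤ (1 - m / (L * finrank ℝ E)) * ∫ ω, D ω ∂P + c := by
  have hGi : Integrable (fun ω => ‖G ω‖ ^ 2) P :=
    (hD.const_mul (2 * L)).mono' (by fun_prop) <| ae_of_all _ fun ω => by
      rw [Real.norm_of_nonneg (sq_nonneg _)]; exact hGD ω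
  have hGUi : Integrable (fun ω => ⟪G ω, U ω⟫ ^ 2) P :=
    integrable_inner_sq_of_ae_norm_eq_one (by fun_prop) hGi
      (ae_of_ae_map hU.aemeasurable (hlaw ▸ hsphere))
  have hD' : Integrable D' P :=
    (hD.add (integrable_const c)).mono' hD'm <| hstep.mono fun ω h => by
      rw [Real.norm_of_nonneg (hD'0 ω), Pi.add_apply]
      linarith [div_nonneg (sq_nonneg ⟪G ω, U ω⟫) (by positivity : (0 : ℝ) ≤ 2 * L)]
  refine ⟨hD', ?_⟩
  have hmoment := finrank_mul_integral_inner_sq_of_indepFun hG hU hGU hlaw hsphere hinv hGi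
  have hPLi : 2 * m * ∫ ω, D ω ∂P ≤ ∫ ω, ‖G ω‖ ^ 2 ∂P := by
    rw [← integral_const_mul]; exact integral_mono (hD.const_mul _) hGi hPL
  have hgain : m / (L * finrank ℝ E) * ∫ ω, D ω ∂P ≤ (∫ ω, ⟪G ω, U ω⟫ ^ 2 ∂P) / (2 * L) := by
    calc m / (L * finrank ℝ E) * ∫ ω, D ω ∂P
        = (2 * m * ∫ ω, D ω ∂P) / (2 * L * finrank ℝ E) := by ring
      _ ≤ (finrank ℝ E * ∫ ω, ⟪G ω, U ω⟫ ^ 2 ∂P) / (2 * L * finrank ℝ E) := by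
        rw [hmoment]; gcongr
      _ ≤ (∫ ω, ⟪G ω, U ω⟫ ^ 2 ∂P) / (2 * L) := by
        rcases eq_or_ne (finrank ℝ E : ℝ) 0 with h | h
        · simp only [h, zero_mul, mul_zero, div_zero]
          exact div_nonneg (integral_nonneg fun ω => sq_nonneg _) (by positivity)
        · rw [mul_comm _ (finrank ℝ E : ℝ), mul_div_mul_left _ _ h]
  have hmono : ∫ ω, D' ω ∂P ≤ ∫ ω, D ω ∂P - (∫ ω, ⟪G ω, U ω⟫ ^ 2 ∂P) / (2 * L) + c := by
    calc ∫ ω, D' ω ∂P ≤ ∫ ω, (D ω - ⟪G ω, U ω⟫ ^ 2 / (2 * L) + c) ∂P :=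
          integral_mono_ae hD' (by fun_prop) hstep
      _ = _ := by
          rw [integral_add (by fun_prop) (integrable_const c), integral_sub hD (by fun_prop),
            integral_div, integral_const, probReal_univ, one_smul]
  linarith

end ExpectedDescent

lemma le_pow_mul_add_div_of_le_one_sub_mul_add {e : ℕ → ℝ} {q b : ℝ} (hq0 : 0 < q)
    (hq1 : q ≤ 1) (hb : 0 ≤ b) (h : ∀ k, e (k + 1) ≤ (1 - q) * e k + b) (N : ℕ) :
    e N ≤ (1 - q) ^ N * e 0 + b / q := by
  induction N with
  | zero => simpa using div_nonneg hb hq0.le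
  | succ k ih =>
    calc e (k + 1) ≤ (1 - q) * ((1 - q) ^ k * e 0 + b / q) + b :=
          (h k).trans (by gcongr)
      _ = (1 - q) ^ (k + 1) * e 0 + b / q := by field_simp; ring

lemma measurable_gradient {E : Type*} [NormedAddCommGroup E] [InnerProductSpace ℝ E]
    [CompleteSpace E] [MeasurableSpace E] [BorelSpace E] (f : E → ℝ) :
    Measurable (gradient f) :=
  (InnerProductSpace.toDual ℝ E).symm.continuous.measurable.comp (measurable_fderiv ℝ f)

theorem rp_convergence_strongly_convex_general (n : ℕ)
    (f : EuclideanSpace ℝ (Fin n) → ℝ)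
    (f' : EuclideanSpace ℝ (Fin n) → EuclideanSpace ℝ (Fin n))
    (L₁ m : ℝ) (hm : 0 < m) (hmL : m ≤ L₁)
    (hdiff : ∀ x, HasGradientAt f (f' x) x)
    (hsc : ∀ x y, m / 2 * ‖y - x‖ ^ 2 ≤ f y - f x - ⟪f' x, y - x⟫)
    (hquad : ∀ x y, f y - f x - ⟪f' x, y - x⟫ ≤ L₁ / 2 * ‖y - x‖ ^ 2)
    (xstar : EuclideanSpace ℝ (Fin n)) (hmin : ∀ y, f xstar ≤ f y)
    (μs : Measure (EuclideanSpace ℝ (Fin n))) [IsProbabilityMeasure μs]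
    (hsphere : ∀ᵐ u ∂μs, ‖u‖ = 1)
    (hinv : ∀ e : EuclideanSpace ℝ (Fin n) ≃ₗᵢ[ℝ] EuclideanSpace ℝ (Fin n), μs.map e = μs)
    (Ω : Type*) [MeasurableSpace Ω] (P : Measure Ω) [IsProbabilityMeasure P]
    (x u : ℕ → Ω → EuclideanSpace ℝ (Fin n)) (hstar htilde : ℕ → Ω → ℝ)
    (μ : ℝ)
    (x₀ : EuclideanSpace ℝ (Fin n)) (hx0 : ∀ ω, x 0 ω = x₀)
    (hxsucc : ∀ k ω, x (k + 1) ω = x k ω + htilde k ω • u k ω)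
    (hls : ∀ k ω, ∀ t : ℝ, f (x k ω + hstar k ω • u k ω) ≤ f (x k ω + t • u k ω))
    (happ : ∀ k ω, |htilde k ω - hstar k ω| ≤ μ)
    (hmeasx : ∀ k, Measurable (x k)) (hmeasu : ∀ k, Measurable (u k))
    (hlaw : ∀ k, P.map (u k) = μs)
    (hindep : ∀ k, IndepFun (x k) (u k) P)
    (N : ℕ) :
    ∫ ω, (f (x N ω) - f xstar) ∂P ≤
      (1 - m / (L₁ * n)) ^ N * (f x₀ - f xstar) + L₁ ^ 2 * n * μ ^ 2 / (2 * m) := by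
  have hL : 0 < L₁ := hm.trans_le hmL
  have hn : 0 < n := by simpa using finrank_pos_of_ae_norm_eq_one hsphere
  have hf : Measurable f :=
    (continuous_iff_continuousAt.mpr fun z => (hdiff z).continuousAt).measurable
  have hf' : Measurable f' := gradient_eq hdiff ▸ measurable_gradient f
  have hstep : ∀ k, ∀ᵐ ω ∂P, f (x (k + 1) ω) - f xstar ≤
      f (x k ω) - f xstar - ⟪f' (x k ω), u k ω⟫ ^ 2 / (2 * L₁) + L₁ / 2 * μ ^ 2 := fun k => by
    filter_upwards [ae_of_ae_map (hmeasu k).aemeasurable (hlaw k ▸ hsphere)] with ω hω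
    rw [hxsucc]
    linarith [le_sub_inner_sq_add_of_approx_line_min hL hquad hω (hls k ω) (happ k ω)]
  have hdescent : ∀ k, Integrable (fun ω => f (x k ω) - f xstar) P →
      Integrable (fun ω => f (x (k + 1) ω) - f xstar) P ∧
      ∫ ω, (f (x (k + 1) ω) - f xstar) ∂P ≤
        (1 - m / (L₁ * n)) * ∫ ω, (f (x k ω) - f xstar) ∂P + L₁ / 2 * μ ^ 2 := fun k hk => by
    simpa [finrank_euclideanSpace_fin] using
      integrable_and_integral_le_one_sub_mul_integral_add hL (hf'.comp (hmeasx k)) (hmeasu k)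
        ((hindep k).comp hf' measurable_id) (hlaw k) hsphere hinv hk
        ((hf.comp (hmeasx _)).sub_const _).aestronglyMeasurable (fun ω => sub_nonneg.mpr (hmin _))
        (fun ω => norm_sq_le_two_mul_sub_of_forall_le hL hquad hmin _)
        (fun ω => two_mul_sub_le_norm_sq_of_strongConvex hm hsc _ _) (hstep k)
  have hint : ∀ k, Integrable (fun ω => f (x k ω) - f xstar) P :=
    Nat.rec (by simp [hx0]) fun k hk => (hdescent k hk).1
  have hq : m / (L₁ * n) ≤ 1 :=
    div_le_one_of_le₀ (hmL.trans (le_mul_of_one_le_right hL.le (Nat.one_le_cast.mpr hn)))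
      (by positivity)
  convert le_pow_mul_add_div_of_le_one_sub_mul_add (e := fun k => ∫ ω, (f (x k ω) - f xstar) ∂P)
    (by positivity) hq (by positivity) (fun k => (hdescent k (hint k)).2) N using 2
  · simp [hx0]
  · field_simp

/-- Linear convergence of Random Pursuit with absolute line search accuracy μ on strongly
convex functions: E[f(x_N) − f(x*)] ≤ (1 − m/(L₁n))^N (f(x₀) − f(x*)) + L₁²nμ²/(2m). -/
theorem rp_convergence_strongly_convex (n : ℕ) (hn : 0 < n)
    (f : EuclideanSpace ℝ (Fin n) → ℝ)
    (f' : EuclideanSpace ℝ (Fin n) → EuclideanSpace ℝ (Fin n))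
    (L₁ m : ℝ) (hm : 0 < m) (hmL : m ≤ L₁)
    (hdiff : ∀ x, HasGradientAt f (f' x) x)
    (hsc : ∀ x y, m / 2 * ‖y - x‖ ^ 2 ≤ f y - f x - ⟪f' x, y - x⟫)
    (hquad : ∀ x y, f y - f x - ⟪f' x, y - x⟫ ≤ L₁ / 2 * ‖y - x‖ ^ 2)
    (xstar : EuclideanSpace ℝ (Fin n)) (hmin : ∀ y, f xstar ≤ f y)
    (μs : Measure (EuclideanSpace ℝ (Fin n))) [IsProbabilityMeasure μs]
    (hsphere : ∀ᵐ u ∂μs, ‖u‖ = 1)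
    (hinv : ∀ e : EuclideanSpace ℝ (Fin n) ≃ₗᵢ[ℝ] EuclideanSpace ℝ (Fin n), μs.map e = μs)
    (Ω : Type*) [MeasurableSpace Ω] (P : Measure Ω) [IsProbabilityMeasure P]
    (x u : ℕ → Ω → EuclideanSpace ℝ (Fin n)) (hstar htilde : ℕ → Ω → ℝ)
    (μ : ℝ) (hμ : 0 ≤ μ)
    (x₀ : EuclideanSpace ℝ (Fin n)) (hx0 : ∀ ω, x 0 ω = x₀)
    (hxsucc : ∀ k ω, x (k + 1) ω = x k ω + htilde k ω • u k ω)
    (hls : ∀ k ω, ∀ t : ℝ, f (x k ω + hstar k ω • u k ω) ≤ f (x k ω + t • u k ω))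
    (happ : ∀ k ω, |htilde k ω - hstar k ω| ≤ μ)
    (hmeasx : ∀ k, Measurable (x k)) (hmeasu : ∀ k, Measurable (u k))
    (hlaw : ∀ k, P.map (u k) = μs)
    (hindep : ∀ k, IndepFun (x k) (u k) P)
    (N : ℕ) :
    ∫ ω, (f (x N ω) - f xstar) ∂P ≤
      (1 - m / (L₁ * n)) ^ N * (f x₀ - f xstar) + L₁ ^ 2 * n * μ ^ 2 / (2 * m) :=
  rp_convergence_strongly_convex_general n f f' L₁ m hm hmL hdiff hsc hquad xstar hmin μs hsphere
    hinv Ω P x u hstar htilde μ x₀ hx0 hxsucc hls happ hmeasx hmeasu hlaw hindep N
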